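/- Let G ∈ F^{k×n} generate an (r,r,d)-robust batch code, let i ∈ [k], and let S_i = { j : G_{i,j} ≠ 0 }. Then the matrix G' obtained from G by deleting row i and all columns in S_i generates an (r,r,d)-robust batch code with message length k−1 and block length n − |S_i| (assuming r ≤ k − 1). -/

import Mathlib

/-!
If `J` recovers the `r` message symbols indexed by `I` from only `|J| ≤ r` codeword symbols, a
dimension count shows that `(xG)|_J` depends on `x` only through `x|_I`. Hence for a row `i ∉ I`
every column of `J` vanishes in row `i`, so `J` is a query set for `G'`: the recovery for `G'`
is the recovery for `G` applied to messages extended by `0` at `i`.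
-/

/-- A matrix `G : ι × κ → F` generates an `(r,r,d)`-robust batch code: for every
request set `I` of size `r` and erasure set `D` of size `d`, there is a query set `J`
of size at most `r`, disjoint from `D`, such that `(xG)|_J` determines `x|_I`. -/
def IsRBC {ι κ : Type} [Fintype ι] [Fintype κ] [DecidableEq ι] [DecidableEq κ]
    (F : Type) [Field F] (r d : ℕ) (G : Matrix ι κ F) : Prop :=
  ∀ I : Finset ι, I.card = r → ∀ D : Finset κ, D.card = d →
    ∃ J : Finset κ, J.card ≤ r ∧ Disjoint J D ∧
      ∀ x y : ι → F, (∀ j ∈ J, Matrix.vecMul x G j = Matrix.vecMul y G j) →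
        ∀ i ∈ I, x i = y i

open Matrix Module

theorem LinearMap.ker_eq_of_ker_le_of_surjective {K V W U : Type*} [DivisionRing K]
    [AddCommGroup V] [Module K V] [AddCommGroup W] [Module K W] [AddCommGroup U] [Module K U]
    [FiniteDimensional K V] [FiniteDimensional K W] {A : V →ₗ[K] W} {ρ : V →ₗ[K] U}
    (hρ : Function.Surjective ρ) (hker : ker A ≤ ker ρ) (hdim : finrank K W ≤ finrank K U) :
    ker A = ker ρ := by
  refine Submodule.eq_of_le_of_finrank_le hker ?_
  have hA := A.finrank_range_add_finrank_ker
  have hρ' := ρ.finrank_range_add_finrank_ker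
  rw [LinearMap.range_eq_top.mpr hρ, finrank_top] at hρ'
  have := (LinearMap.range A).finrank_le
  omega

section Recovery

variable {ι κ F : Type*} [Fintype ι] [Field F] {G : Matrix ι κ F} {I : Finset ι} {J : Finset κ}

theorem vecMul_eq_zero_of_recovers (hcard : J.card ≤ I.card)
    (hrec : ∀ x y : ι → F, (∀ j ∈ J, vecMul x G j = vecMul y G j) → ∀ i ∈ I, x i = y i)
    {x : ι → F} (hx : ∀ i ∈ I, x i = 0) : ∀ j ∈ J, vecMul x G j = 0 := by
  set A := (LinearMap.funLeft F F (Subtype.val : J → κ)).comp G.vecMulLinear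
  set ρ := LinearMap.funLeft F F (Subtype.val : I → ι)
  have hker : LinearMap.ker A ≤ LinearMap.ker ρ := fun y hy ↦ by
    have hy0 : ∀ j ∈ J, vecMul y G j = vecMul 0 G j := fun j hj ↦ by
      simpa [A] using congrFun (LinearMap.mem_ker.mp hy) ⟨j, hj⟩
    ext a
    simpa [ρ] using hrec y 0 hy0 a a.2
  have hxA : x ∈ LinearMap.ker A := by
    rw [LinearMap.ker_eq_of_ker_le_of_surjective
      (LinearMap.funLeft_surjective_of_injective F F _ Subtype.val_injective) hker
      (by simpa using hcard)]
    ext a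
    simpa [ρ] using hx a a.2
  exact fun j hj ↦ by simpa [A] using congrFun (LinearMap.mem_ker.mp hxA) ⟨j, hj⟩

theorem apply_eq_zero_of_recovers [DecidableEq ι] (hcard : J.card ≤ I.card)
    (hrec : ∀ x y : ι → F, (∀ j ∈ J, vecMul x G j = vecMul y G j) → ∀ i ∈ I, x i = y i)
    {i : ι} (hi : i ∉ I) : ∀ j ∈ J, G i j = 0 := fun j hj ↦ by
  simpa [single_vecMul] using vecMul_eq_zero_of_recovers hcard hrec
    (x := Pi.single i 1) (fun a ha ↦ Pi.single_eq_of_ne (ne_of_mem_of_not_mem ha hi) 1) j hj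

end Recovery

theorem Matrix.vecMul_submatrix_subtype {ι κ κ' F : Type*} [Fintype ι] [CommSemiring F]
    {p : ι → Prop} [DecidablePred p] (G : Matrix ι κ F) (g : κ' → κ) (z : {a // p a} → F)
    (j : κ') :
    vecMul z (G.submatrix Subtype.val g) j =
      vecMul (fun a ↦ if h : p a then z ⟨a, h⟩ else 0) G (g j) := by
  simp only [vecMul, dotProduct, submatrix_apply]
  rw [← Fintype.sum_subtype_add_sum_subtype p (fun a ↦ _ * G a (g j))]
  rw [Fintype.sum_eq_zero (fun a : {a // ¬p a} ↦ _) (fun a ↦ by simp [a.2]), add_zero]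
  exact Fintype.sum_congr _ _ fun a ↦ by simp [a.2]

open Classical in
theorem IsRBC.submatrix_deleteRowSupport {ι κ F : Type} [Fintype ι] [Fintype κ]
    [DecidableEq ι] [DecidableEq κ] [Field F] {r d : ℕ} {G : Matrix ι κ F}
    (hG : IsRBC F r d G) (i : ι) :
    IsRBC F r d (G.submatrix (fun a : {a // a ≠ i} ↦ a.1) (fun b : {b // G i b = 0} ↦ b.1)) := by
  intro I' hI' D' hD'
  obtain ⟨J, hJcard, hJD, hJrec⟩ :=
    hG (I'.map (.subtype _)) (by simp [hI']) (D'.map (.subtype _)) (by simp [hD'])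
  have hJ : ∀ j ∈ J, G i j = 0 :=
    apply_eq_zero_of_recovers (by simpa [hI'] using hJcard) hJrec (by simp)
  have hJmap : (J.subtype (G i · = 0)).map (.subtype _) = J := Finset.subtype_map_of_mem hJ
  refine ⟨J.subtype (G i · = 0), ?_, ?_, fun x y hxy a ha ↦ ?_⟩
  · rwa [← Finset.card_map, hJmap]
  · rwa [← Finset.disjoint_map (.subtype _), hJmap]
  · have hext := hJrec _ _ (fun j hj ↦ by
      simpa only [vecMul_submatrix_subtype] using hxy ⟨j, hJ j hj⟩ (by simpa using hj))
      a (Finset.mem_map_of_mem _ ha)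
    rwa [dif_pos a.2, dif_pos a.2] at hext

open Classical in
theorem stmt_7_general {F : Type} [Field F] {k n r d : ℕ}
    (G : Matrix (Fin k) (Fin n) F) (hG : IsRBC F r d G) (i : Fin k) :
    IsRBC F r d
      (G.submatrix (fun i' : {a : Fin k // a ≠ i} => i'.1)
        (fun j : {b : Fin n // G i b = 0} => j.1)) :=
  hG.submatrix_deleteRowSupport i

open Classical in
theorem stmt_7 {F : Type} [Field F] [Fintype F] {k n r d : ℕ}
    (hr : 1 ≤ r) (hrk : r ≤ k - 1) (hk : 1 ≤ k)
    (G : Matrix (Fin k) (Fin n) F) (hG : IsRBC F r d G) (i : Fin k) :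
    IsRBC F r d
      (G.submatrix (fun i' : {a : Fin k // a ≠ i} => i'.1)
        (fun j : {b : Fin n // G i b = 0} => j.1)) :=
  stmt_7_general G hG i
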